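/- arXiv:math/9202206 — 8 statements merged into one kernel-verified Lean document; each statement's English description precedes it below -/
import Mathlib

section
/- Let E be a real Banach space and f : ℝ → E a curve. If for every continuous linear functional λ : E → ℝ the composition λ ∘ f : ℝ → ℝ is C^∞, then f itself is C^∞. (Banach-space instance of the lemma that scalarwise smooth curves into a convenient vector space are smooth.) -/
/-!
Fix `a` and let `T = closedBall a 1 \ {a}`. For each functional `l`, Taylor's estimate for the
`C²` function `l ∘ f` gives `|l (slope f a s - slope f a t)| ≤ K_l (|s - a| + |t - a|)` on `T`.
By Banach–Steinhaus the constant can be chosen independently of `l`, so the slopes of `f` at `a`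
form a Cauchy family and converge in the Banach space `E`. Thus `f` is differentiable with
`l ∘ f' = (l ∘ f)'`, so `f'` is again scalarwise smooth, and induction gives every order.
-/

open Filter Topology Metric Set

theorem exists_norm_le_mul_of_forall_norm_apply_le {𝕜 E ι : Type*} [RCLike 𝕜]
    [NormedAddCommGroup E] [NormedSpace 𝕜 E] (v : ι → E) {w : ι → ℝ} (hw : ∀ i, 0 < w i)
    (h : ∀ l : StrongDual 𝕜 E, ∃ C, ∀ i, ‖l (v i)‖ ≤ C * w i) : ∃ M, ∀ i, ‖v i‖ ≤ M * w i := by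
  set u : ι → E := fun i ↦ (w i : 𝕜)⁻¹ • v i
  have hu : ∀ i, ‖v i‖ = w i * ‖u i‖ := fun i ↦ by
    rw [norm_smul, norm_inv, RCLike.norm_ofReal, abs_of_pos (hw i),
      mul_inv_cancel_left₀ (hw i).ne']
  have hlu : ∀ l : StrongDual 𝕜 E, ∀ i, ‖l (v i)‖ = w i * ‖l (u i)‖ := fun l i ↦ by
    rw [map_smul, norm_smul, norm_inv, RCLike.norm_ofReal, abs_of_pos (hw i),
      mul_inv_cancel_left₀ (hw i).ne']
  -- Banach–Steinhaus on the dual, which is complete even when `E` is not.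
  obtain ⟨M, hM⟩ := banach_steinhaus (g := fun i ↦ NormedSpace.inclusionInDoubleDualLi 𝕜 (u i))
    fun l ↦ (h l).imp fun C hC i ↦
      le_of_mul_le_mul_left ((hlu l i).symm.trans_le ((hC i).trans_eq (mul_comm _ _))) (hw i)
  refine ⟨M, fun i ↦ ?_⟩
  rw [hu, mul_comm M]
  exact mul_le_mul_of_nonneg_left (by simpa only [LinearIsometry.norm_map] using hM i) (hw i).le

theorem exists_tendsto_of_dist_le_mul {α β : Type*} [PseudoMetricSpace α] [PseudoMetricSpace β]
    [CompleteSpace β] {F : α → β} {a : α} {l : Filter α} [l.NeBot] (hl : l ≤ 𝓝 a) {M : ℝ}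
    (h : ∀ᶠ p in l ×ˢ l, dist (F p.1) (F p.2) ≤ M * (dist p.1 a + dist p.2 a)) :
    ∃ L, Tendsto F l (𝓝 L) := by
  refine cauchy_map_iff_exists_tendsto.1 (cauchy_map_iff'.2 ?_)
  rw [tendsto_uniformity_iff_dist_tendsto_zero]
  refine squeeze_zero' (.of_forall fun _ ↦ dist_nonneg) h ?_
  have hcont : Continuous fun p : α × α ↦ M * (dist p.1 a + dist p.2 a) := by fun_prop
  have hle : l ×ˢ l ≤ 𝓝 (a, a) := nhds_prod_eq (x := a) (y := a) ▸ prod_mono hl hl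
  simpa using (hcont.tendsto (a, a)).mono_left hle

theorem ContDiff.exists_norm_sub_sub_smul_deriv_le {F : Type*} [NormedAddCommGroup F]
    [NormedSpace ℝ F] {g : ℝ → F} (hg : ContDiff ℝ 2 g) (a r : ℝ) :
    ∃ K, ∀ s ∈ closedBall a r, ‖g s - g a - (s - a) • deriv g a‖ ≤ K * (s - a) ^ 2 := by
  have hg' : ContDiff ℝ 1 (deriv g) := (contDiff_succ_iff_deriv.1 hg).2.2
  obtain ⟨K, hK⟩ := (isCompact_closedBall a r).exists_bound_of_continuousOn
    (hg'.continuous_deriv le_rfl).continuousOn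
  refine ⟨K, fun s hs ↦ ?_⟩
  have hsa : s ∈ closedBall a |s - a| := by simp [Real.dist_eq]
  have ha : a ∈ closedBall a |s - a| := mem_closedBall_self (abs_nonneg _)
  have hsub : closedBall a |s - a| ⊆ closedBall a r :=
    closedBall_subset_closedBall (by simpa [Real.dist_eq] using hs)
  have hG : ∀ x, HasDerivAt (fun x ↦ g x - (x - a) • deriv g a) (deriv g x - deriv g a) x :=
    fun x ↦ ((hg.differentiable two_ne_zero x).hasDerivAt).sub
      (by simpa using ((hasDerivAt_id x).sub_const a).smul_const (deriv g a))
  have hG_bound : ∀ x ∈ closedBall a |s - a|, ‖deriv g x - deriv g a‖ ≤ K * |s - a| :=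
    fun x hx ↦ calc
      ‖deriv g x - deriv g a‖ ≤ K * ‖x - a‖ :=
        (convex_closedBall a r).norm_image_sub_le_of_norm_deriv_le
          (fun y _ ↦ hg'.differentiable one_ne_zero y) hK (hsub ha) (hsub hx)
      _ ≤ K * |s - a| := mul_le_mul_of_nonneg_left (by simpa [Real.dist_eq] using hx)
          ((norm_nonneg _).trans (hK a (hsub ha)))
  have := (convex_closedBall a |s - a|).norm_image_sub_le_of_norm_hasDerivWithin_le
    (fun x _ ↦ (hG x).hasDerivWithinAt) hG_bound ha hsa
  simpa [sub_right_comm, sq_abs, pow_two, mul_assoc] using this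

theorem ContDiff.exists_norm_slope_sub_deriv_le {F : Type*} [NormedAddCommGroup F]
    [NormedSpace ℝ F] {g : ℝ → F} (hg : ContDiff ℝ 2 g) (a r : ℝ) :
    ∃ K, ∀ s ∈ closedBall a r, s ≠ a → ‖slope g a s - deriv g a‖ ≤ K * |s - a| := by
  obtain ⟨K, hK⟩ := hg.exists_norm_sub_sub_smul_deriv_le a r
  refine ⟨K, fun s hs hsa ↦ ?_⟩
  have hsa' : s - a ≠ 0 := sub_ne_zero.2 hsa
  have hslope : slope g a s - deriv g a = (s - a)⁻¹ • (g s - g a - (s - a) • deriv g a) := by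
    rw [smul_sub, smul_smul, inv_mul_cancel₀ hsa', one_smul, slope_def_module]
  rw [hslope, norm_smul, norm_inv, Real.norm_eq_abs, inv_mul_le_iff₀ (abs_pos.2 hsa')]
  calc ‖g s - g a - (s - a) • deriv g a‖ ≤ K * (s - a) ^ 2 := hK s hs
    _ = |s - a| * (K * |s - a|) := by rw [← sq_abs]; ring

theorem ContDiff.exists_norm_slope_sub_slope_le {F : Type*} [NormedAddCommGroup F]
    [NormedSpace ℝ F] {g : ℝ → F} (hg : ContDiff ℝ 2 g) (a r : ℝ) :
    ∃ K, ∀ s ∈ closedBall a r \ {a}, ∀ t ∈ closedBall a r \ {a},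
      ‖slope g a s - slope g a t‖ ≤ K * (|s - a| + |t - a|) := by
  obtain ⟨K, hK⟩ := hg.exists_norm_slope_sub_deriv_le a r
  refine ⟨K, fun s hs t ht ↦ ?_⟩
  calc ‖slope g a s - slope g a t‖
        = ‖(slope g a s - deriv g a) - (slope g a t - deriv g a)‖ := by
          rw [sub_sub_sub_cancel_right]
    _ ≤ K * |s - a| + K * |t - a| :=
        (norm_sub_le _ _).trans (add_le_add (hK s hs.1 hs.2) (hK t ht.1 ht.2))
    _ = K * (|s - a| + |t - a|) := by ring

def ScalarwiseContDiff {E : Type*} [NormedAddCommGroup E] [NormedSpace ℝ E] (n : WithTop ℕ∞)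
    (f : ℝ → E) : Prop :=
  ∀ l : StrongDual ℝ E, ContDiff ℝ n (l ∘ f)

namespace ScalarwiseContDiff

variable {E : Type*} [NormedAddCommGroup E] [NormedSpace ℝ E] {f : ℝ → E}

theorem differentiable [CompleteSpace E] {n : WithTop ℕ∞} (hf : ScalarwiseContDiff n f)
    (hn : 2 ≤ n) : Differentiable ℝ f := by
  intro a
  set T := closedBall a 1 \ {a}
  have hw : ∀ p : T × T, 0 < |p.1 - a| + |p.2 - a| := fun p ↦
    add_pos_of_pos_of_nonneg (abs_sub_pos.2 p.1.2.2) (abs_nonneg _)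
  obtain ⟨M, hM⟩ := exists_norm_le_mul_of_forall_norm_apply_le
    (fun p : T × T ↦ slope f a p.1 - slope f a p.2) hw fun l ↦ by
      obtain ⟨K, hK⟩ := ((hf l).of_le hn).exists_norm_slope_sub_slope_le a 1
      have hl : ∀ s, slope (l ∘ f) a s = l (slope f a s) := l.toLinearMap.slope_comp f a
      exact ⟨K, fun p ↦ by simpa only [hl, map_sub] using hK p.1 p.1.2 p.2 p.2.2⟩
  have hT : T ∈ 𝓝[≠] a := sdiff_mem_nhdsWithin_compl (closedBall_mem_nhds a one_pos) _
  obtain ⟨L, hL⟩ := exists_tendsto_of_dist_le_mul (F := slope f a) nhdsWithin_le_nhds (M := M) <|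
    mem_of_superset (prod_mem_prod hT hT) fun p hp ↦ by
      simpa [dist_eq_norm, Real.dist_eq] using hM ⟨⟨p.1, hp.1⟩, ⟨p.2, hp.2⟩⟩
  exact (hasDerivAt_iff_tendsto_slope.2 hL).differentiableAt

theorem deriv {n : WithTop ℕ∞} (hf : ScalarwiseContDiff (n + 1) f)
    (hdiff : Differentiable ℝ f) : ScalarwiseContDiff n (deriv f) := fun l ↦ by
  have hcomp : _root_.deriv (l ∘ f) = l ∘ _root_.deriv f := funext fun t ↦
    (l.hasFDerivAt.comp_hasDerivAt t (hdiff t).hasDerivAt).deriv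
  simpa only [hcomp] using (contDiff_succ_iff_deriv.1 (hf l)).2.2

theorem contDiff [CompleteSpace E] (n : ℕ) (hf : ScalarwiseContDiff (n + 2) f) :
    ContDiff ℝ n f := by
  induction n generalizing f with
  | zero => exact contDiff_zero.2 (hf.differentiable le_add_self).continuous
  | succ n ih =>
    have hdiff := hf.differentiable le_add_self
    have hf' : ScalarwiseContDiff (n + 2) (_root_.deriv f) := hf.deriv hdiff
    rw [Nat.cast_succ]
    exact contDiff_succ_iff_deriv.2 ⟨hdiff, by simp, ih hf'⟩

end ScalarwiseContDiff

/-- A scalarwise smooth curve into a Banach space is smooth. -/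
theorem smooth_of_scalarwise_smooth {E : Type*} [NormedAddCommGroup E] [NormedSpace ℝ E]
    [CompleteSpace E] (f : ℝ → E)
    (h : ∀ l : E →L[ℝ] ℝ, ContDiff ℝ (⊤ : ℕ∞) (fun t => l (f t))) :
    ContDiff ℝ (⊤ : ℕ∞) f :=
  contDiff_infty.2 fun n ↦ ScalarwiseContDiff.contDiff n fun l ↦
    (h l).of_le (WithTop.coe_le_coe.2 le_top)
end

section
/- Let E be a real normed vector space, let a < b be real numbers, and let f : ℝ → E be a curve such that for every continuous linear functional λ : E → ℝ there exists a constant K_λ with λ ∘ f Lipschitz with constant K_λ on the interval [a,b]. Then there exists a constant K such that f is Lipschitz with constant K on [a,b]. (Scalarwise Lipschitz curves are Lipschitz, part of the characterization of Lipschitz curves via bounded functionals.) -/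
/-!
Divide the increments of `f` by `|t - s|`: a bound on `λ ∘ f` of Lipschitz type says exactly that
every functional is bounded on this family of difference quotients. Viewed in the bidual, the
difference quotients are continuous functionals on the Banach space `E*` that are pointwise
bounded, so the uniform boundedness principle bounds their norms, which are their norms in `E`.
-/

theorem exists_norm_le_of_forall_dual_bounded {𝕜 E ι : Type*} [RCLike 𝕜]
    [SeminormedAddCommGroup E] [NormedSpace 𝕜 E] {v : ι → E}
    (h : ∀ l : StrongDual 𝕜 E, ∃ C, ∀ i, ‖l (v i)‖ ≤ C) : ∃ C, ∀ i, ‖v i‖ ≤ C := by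
  obtain ⟨C, hC⟩ := banach_steinhaus (g := fun i ↦ NormedSpace.inclusionInDoubleDual 𝕜 E (v i)) h
  exact ⟨C, fun i ↦ (NormedSpace.inclusionInDoubleDualLi 𝕜).norm_map (v i) ▸ hC i⟩

theorem norm_sub_le_mul_dist_iff_norm_smul_le {α E : Type*} [MetricSpace α]
    [SeminormedAddCommGroup E] [NormedSpace ℝ E] {f : α → E} {s t : α} (hst : s ≠ t) (K : ℝ) :
    ‖f t - f s‖ ≤ K * dist t s ↔ ‖(dist t s)⁻¹ • (f t - f s)‖ ≤ K := by
  have hdist : 0 < dist t s := dist_pos.2 hst.symm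
  rw [norm_smul, Real.norm_of_nonneg (inv_nonneg.2 hdist.le), inv_mul_le_iff₀ hdist, mul_comm]

theorem exists_norm_sub_le_mul_dist_of_forall_dual {α E : Type*} [MetricSpace α]
    [SeminormedAddCommGroup E] [NormedSpace ℝ E] {S : Set α} {f : α → E}
    (h : ∀ l : StrongDual ℝ E, ∃ K, ∀ s ∈ S, ∀ t ∈ S, ‖l (f t) - l (f s)‖ ≤ K * dist t s) :
    ∃ K, ∀ s ∈ S, ∀ t ∈ S, ‖f t - f s‖ ≤ K * dist t s := by
  let quotient (p : {p : α × α // p.1 ∈ S ∧ p.2 ∈ S ∧ p.1 ≠ p.2}) : E :=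
    (dist p.1.2 p.1.1)⁻¹ • (f p.1.2 - f p.1.1)
  have hweak : ∀ l : StrongDual ℝ E, ∃ K, ∀ p, ‖l (quotient p)‖ ≤ K := by
    intro l
    obtain ⟨K, hK⟩ := h l
    refine ⟨K, fun ⟨(s, t), hs, ht, hst⟩ ↦ ?_⟩
    have := (norm_sub_le_mul_dist_iff_norm_smul_le (f := l ∘ f) hst K).1 (hK s hs t ht)
    simpa only [quotient, map_smul, map_sub, Function.comp_apply] using this
  obtain ⟨K, hK⟩ := exists_norm_le_of_forall_dual_bounded hweak
  refine ⟨K, fun s hs t ht ↦ ?_⟩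
  rcases eq_or_ne s t with rfl | hst
  · simp
  · exact (norm_sub_le_mul_dist_iff_norm_smul_le hst K).2 (hK ⟨(s, t), hs, ht, hst⟩)

theorem lipschitz_of_scalarwise_lipschitz_general {E : Type*} [NormedAddCommGroup E] [NormedSpace ℝ E]
    (a b : ℝ) (f : ℝ → E)
    (h : ∀ l : E →L[ℝ] ℝ, ∃ K : ℝ, ∀ s ∈ Set.Icc a b, ∀ t ∈ Set.Icc a b,
      ‖l (f t) - l (f s)‖ ≤ K * |t - s|) :
    ∃ K : ℝ, ∀ s ∈ Set.Icc a b, ∀ t ∈ Set.Icc a b, ‖f t - f s‖ ≤ K * |t - s| := by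
  simp only [← Real.dist_eq] at h ⊢
  exact exists_norm_sub_le_mul_dist_of_forall_dual h

/-- A scalarwise Lipschitz curve into a normed space is Lipschitz on `[a,b]`. -/
theorem lipschitz_of_scalarwise_lipschitz {E : Type*} [NormedAddCommGroup E] [NormedSpace ℝ E]
    (a b : ℝ) (hab : a < b) (f : ℝ → E)
    (h : ∀ l : E →L[ℝ] ℝ, ∃ K : ℝ, ∀ s ∈ Set.Icc a b, ∀ t ∈ Set.Icc a b,
      ‖l (f t) - l (f s)‖ ≤ K * |t - s|) :
    ∃ K : ℝ, ∀ s ∈ Set.Icc a b, ∀ t ∈ Set.Icc a b, ‖f t - f s‖ ≤ K * |t - s| :=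
  lipschitz_of_scalarwise_lipschitz_general a b f h
end

section
/- Let E and F be real Banach spaces and let c : ℝ → L(E,F) be a curve into the space of bounded linear operators from E to F with the operator norm. Then c is C^∞ if and only if for every x ∈ E the curve t ↦ c(t)(x) is a C^∞ curve in F. (Banach-space instance of the lemma that a curve into L(E,F) is smooth iff it is smooth pointwise.) -/
/-!
By Banach–Steinhaus, a curve of operators that is pointwise Lipschitz on a set is Lipschitz there
in operator norm, and pointwise limits of operators (here: of difference quotients) are again
bounded operators. So a pointwise `C^1` curve is norm-continuous and its pointwise derivative is a
curve of operators; once that derivative is norm-continuous, the mean value inequality makes it the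
derivative in operator norm. By induction, pointwise `C^(n+1)` implies `C^n` in operator norm.
-/

open Filter Topology

section

variable {E F : Type*} [NormedAddCommGroup E] [NormedSpace ℝ E]
  [NormedAddCommGroup F] [NormedSpace ℝ F]

theorem exists_lipschitzOnWith_of_forall_lipschitzOnWith_apply [CompleteSpace E]
    {α : Type*} [PseudoMetricSpace α] {c : α → E →L[ℝ] F} {s : Set α}
    (hc : ∀ x, ∃ K, LipschitzOnWith K (fun t => c t x) s) : ∃ K, LipschitzOnWith K c s := by
  choose K hK using hc
  let q : s ×ˢ s → E →L[ℝ] F := fun p => (dist p.1.1 p.1.2)⁻¹ • (c p.1.1 - c p.1.2)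
  have hq_apply (p : s ×ˢ s) (x : E) :
      ‖q p x‖ = (dist p.1.1 p.1.2)⁻¹ * dist (c p.1.1 x) (c p.1.2 x) := by
    simp [q, norm_smul, dist_eq_norm]
  obtain ⟨C, hC⟩ := banach_steinhaus (g := q) fun x => ⟨K x, fun ⟨(a, b), ha, hb⟩ => by
    rw [hq_apply]
    exact inv_mul_le_of_le_mul₀ dist_nonneg (NNReal.coe_nonneg _)
      (((hK x).dist_le_mul a ha b hb).trans_eq (mul_comm _ _))⟩
  refine ⟨Real.toNNReal C, LipschitzOnWith.of_dist_le_mul fun a ha b hb => ?_⟩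
  rcases eq_or_ne (dist a b) 0 with hab | hab
  · suffices c a = c b by simp [this, hab]
    ext x
    simpa [hab] using (hK x).dist_le_mul a ha b hb
  · calc dist (c a) (c b) = ‖q ⟨(a, b), ha, hb⟩‖ * dist a b := by
          simp only [dist_eq_norm, norm_smul, norm_inv, Real.norm_eq_abs, abs_dist, q]
          field_simp
      _ ≤ Real.toNNReal C * dist a b := by
          gcongr
          exact (hC _).trans (Real.le_coe_toNNReal C)

theorem continuous_of_forall_contDiff_one_apply [CompleteSpace E]
    {G : Type*} [NormedAddCommGroup G] [NormedSpace ℝ G] [ProperSpace G] {c : G → E →L[ℝ] F}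
    (hc : ∀ x, ContDiff ℝ 1 (fun t => c t x)) : Continuous c := by
  refine continuous_iff_continuousAt.2 fun t => ?_
  obtain ⟨K, hK⟩ := exists_lipschitzOnWith_of_forall_lipschitzOnWith_apply fun x =>
    (hc x).contDiffOn.exists_lipschitzOnWith one_ne_zero (convex_closedBall t 1)
      (isCompact_closedBall t 1)
  exact hK.continuousOn.continuousAt (Metric.closedBall_mem_nhds t one_pos)

theorem exists_clm_apply_eq_deriv [CompleteSpace E] {c : ℝ → E →L[ℝ] F} {t : ℝ}
    (hc : ∀ x, DifferentiableAt ℝ (fun s => c s x) t) :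
    ∃ D : E →L[ℝ] F, ∀ x, D x = deriv (fun s => c s x) t := by
  have hslope : Tendsto (fun s x => slope c t s x) (𝓝[≠] t)
      (𝓝 fun x => deriv (fun s => c s x) t) :=
    tendsto_pi_nhds.2 fun x =>
      (hc x).hasDerivAt.tendsto_slope.congr fun s => by simp [slope_def_module]
  exact ⟨continuousLinearMapOfTendsto _ hslope, fun x => rfl⟩

theorem hasDerivAt_of_continuousAt_of_hasDerivAt_apply {c d : ℝ → E →L[ℝ] F} {t : ℝ}
    (hd : ContinuousAt d t) (hc : ∀ x u, HasDerivAt (fun s => c s x) (d u x) u) :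
    HasDerivAt c (d t) t := by
  refine hasDerivAt_iff_isLittleO.2 <| Asymptotics.isLittleO_iff.2 fun ε hε => ?_
  obtain ⟨δ, hδ, hdδ⟩ := Metric.continuousAt_iff.1 hd ε hε
  filter_upwards [Metric.ball_mem_nhds t hδ] with s hs
  refine ContinuousLinearMap.opNorm_le_bound _ (by positivity) fun x => ?_
  have hderiv : ∀ u ∈ Metric.ball t δ, HasDerivWithinAt (fun u => c u x - u • d t x)
      (d u x - d t x) (Metric.ball t δ) u := fun u _ =>
    ((hc x u).sub (by simpa using (hasDerivAt_id u).smul_const (d t x))).hasDerivWithinAt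
  have hbound : ∀ u ∈ Metric.ball t δ, ‖d u x - d t x‖ ≤ ε * ‖x‖ := fun u hu => by
    rw [← sub_apply]
    exact ((d u - d t).le_opNorm x).trans
      (by gcongr; exact (dist_eq_norm (d u) (d t)) ▸ (hdδ hu).le)
  have hmv := (convex_ball t δ).norm_image_sub_le_of_norm_hasDerivWithin_le hderiv hbound
    (Metric.mem_ball_self hδ) hs
  calc ‖(c s - c t - (s - t) • d t) x‖
      = ‖c s x - s • d t x - (c t x - t • d t x)‖ := by
        congr 1; simp only [sub_apply, smul_apply, sub_smul]; abel
    _ ≤ ε * ‖x‖ * ‖s - t‖ := hmv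
    _ = ε * ‖s - t‖ * ‖x‖ := by ring

theorem contDiff_of_forall_contDiff_succ_apply [CompleteSpace E] (n : ℕ) {c : ℝ → E →L[ℝ] F}
    (hc : ∀ x, ContDiff ℝ (n + 1) (fun t => c t x)) : ContDiff ℝ n c := by
  induction n generalizing c with
  | zero => exact contDiff_zero.2 (continuous_of_forall_contDiff_one_apply (by simpa using hc))
  | succ n ih =>
    have hdiff x : Differentiable ℝ (fun t => c t x) := (hc x).differentiable (by simp)
    choose d hd using fun t => exists_clm_apply_eq_deriv fun x => hdiff x t
    have hd_contDiff : ContDiff ℝ n d := ih fun x => by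
      simpa [← funext fun t => hd t x] using (contDiff_succ_iff_deriv.1 (hc x)).2.2
    have hc_deriv t : HasDerivAt c (d t) t :=
      hasDerivAt_of_continuousAt_of_hasDerivAt_apply hd_contDiff.continuous.continuousAt
        fun x u => hd u x ▸ (hdiff x u).hasDerivAt
    rw [Nat.cast_succ]
    refine contDiff_succ_iff_deriv.2 ⟨fun t => (hc_deriv t).differentiableAt, by simp, ?_⟩
    rwa [funext fun t => (hc_deriv t).deriv]

end

theorem contDiff_clm_iff_pointwise_general {E F : Type*}
    [NormedAddCommGroup E] [NormedSpace ℝ E] [CompleteSpace E]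
    [NormedAddCommGroup F] [NormedSpace ℝ F]
    (c : ℝ → (E →L[ℝ] F)) :
    ContDiff ℝ (⊤ : ℕ∞) c ↔ ∀ x : E, ContDiff ℝ (⊤ : ℕ∞) (fun t => c t x) :=
  ⟨fun hc x => hc.clm_apply contDiff_const, fun hc => contDiff_infty.2 fun n =>
    contDiff_of_forall_contDiff_succ_apply n fun x => (hc x).of_le (by exact_mod_cast le_top)⟩

/-- A curve into the space of bounded linear operators between Banach spaces is smooth
iff it is smooth pointwise. -/
theorem contDiff_clm_iff_pointwise {E F : Type*}
    [NormedAddCommGroup E] [NormedSpace ℝ E] [CompleteSpace E]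
    [NormedAddCommGroup F] [NormedSpace ℝ F] [CompleteSpace F]
    (c : ℝ → (E →L[ℝ] F)) :
    ContDiff ℝ (⊤ : ℕ∞) c ↔ ∀ x : E, ContDiff ℝ (⊤ : ℕ∞) (fun t => c t x) :=
  contDiff_clm_iff_pointwise_general c
end

section
/- Let E be a real Banach space, a ∈ E, and let ℓ be a bounded linear functional on the Banach space of continuous bilinear forms E × E → ℝ (identified with E →L E →L ℝ) which vanishes on every decomposable form (x,y) ↦ φ(x)·ψ(y) for continuous linear functionals φ, ψ : E → ℝ. Then for all twice continuously differentiable functions f, g : E → ℝ one has ℓ(D²(f·g)(a)) = ℓ(D²f(a))·g(a) + f(a)·ℓ(D²g(a)); that is, f ↦ ℓ(D²f(a)) is a derivation over evaluation at a (an operational tangent vector). -/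
/-!
The Leibniz rule gives `D²(fg)(a) = f(a) D²g(a) + g(a) D²f(a) + Df(a) ⊗ Dg(a) + Dg(a) ⊗ Df(a)`.
The two cross terms are decomposable, so `ℓ` kills them and only the derivation terms survive.
-/

theorem fderiv_fderiv_mul {𝕜 E : Type*} [NontriviallyNormedField 𝕜] [NormedAddCommGroup E]
    [NormedSpace 𝕜 E] {f g : E → 𝕜} {a : E} (hf : ContDiffAt 𝕜 2 f a)
    (hg : ContDiffAt 𝕜 2 g a) :
    fderiv 𝕜 (fderiv 𝕜 (fun x => f x * g x)) a =
      f a • fderiv 𝕜 (fderiv 𝕜 g) a + (fderiv 𝕜 f a).smulRight (fderiv 𝕜 g a) +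
        (g a • fderiv 𝕜 (fderiv 𝕜 f) a + (fderiv 𝕜 g a).smulRight (fderiv 𝕜 f a)) := by
  have hf1 : DifferentiableAt 𝕜 f a := hf.differentiableAt two_ne_zero
  have hg1 : DifferentiableAt 𝕜 g a := hg.differentiableAt two_ne_zero
  have hDf : DifferentiableAt 𝕜 (fderiv 𝕜 f) a :=
    (hf.fderiv_right one_add_one_eq_two.le).differentiableAt one_ne_zero
  have hDg : DifferentiableAt 𝕜 (fderiv 𝕜 g) a :=
    (hg.fderiv_right one_add_one_eq_two.le).differentiableAt one_ne_zero
  have hD_mul : fderiv 𝕜 (fun x => f x * g x) =ᶠ[nhds a]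
      fun x => f x • fderiv 𝕜 g x + g x • fderiv 𝕜 f x := by
    filter_upwards [hf.eventually (by simp), hg.eventually (by simp)] with x hfx hgx
    exact fderiv_mul (hfx.differentiableAt two_ne_zero) (hgx.differentiableAt two_ne_zero)
  rw [hD_mul.fderiv_eq]
  exact ((hf1.hasFDerivAt.smul hDg.hasFDerivAt).add (hg1.hasFDerivAt.smul hDf.hasFDerivAt)).fderiv

theorem second_order_operational_tangent_vector_general {E : Type*}
    [NormedAddCommGroup E] [NormedSpace ℝ E] (a : E)
    (l : (E →L[ℝ] E →L[ℝ] ℝ) →L[ℝ] ℝ)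
    (hl : ∀ φ ψ : E →L[ℝ] ℝ, l (φ.smulRight ψ) = 0)
    (f g : E → ℝ) (hf : ContDiff ℝ 2 f) (hg : ContDiff ℝ 2 g) :
    l (fderiv ℝ (fderiv ℝ (fun x => f x * g x)) a) =
      l (fderiv ℝ (fderiv ℝ f) a) * g a + f a * l (fderiv ℝ (fderiv ℝ g) a) := by
  rw [fderiv_fderiv_mul hf.contDiffAt hg.contDiffAt]
  simp only [map_add, map_smul, hl, smul_eq_mul, add_zero]
  ring

/-- A bounded linear functional on bilinear forms vanishing on decomposable forms
yields a derivation over evaluation at `a` via the second derivative. -/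
theorem second_order_operational_tangent_vector {E : Type*}
    [NormedAddCommGroup E] [NormedSpace ℝ E] [CompleteSpace E] (a : E)
    (l : (E →L[ℝ] E →L[ℝ] ℝ) →L[ℝ] ℝ)
    (hl : ∀ φ ψ : E →L[ℝ] ℝ, l (φ.smulRight ψ) = 0)
    (f g : E → ℝ) (hf : ContDiff ℝ 2 f) (hg : ContDiff ℝ 2 g) :
    l (fderiv ℝ (fderiv ℝ (fun x => f x * g x)) a) =
      l (fderiv ℝ (fderiv ℝ f) a) * g a + f a * l (fderiv ℝ (fderiv ℝ g) a) :=
  second_order_operational_tangent_vector_general a l hl f g hf hg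
end

section
/- Let E be an infinite-dimensional real Hilbert space. Then there exists a nonzero bounded linear functional ℓ on the Banach space of continuous bilinear forms E × E → ℝ (identified with E →L E →L ℝ) which vanishes on every decomposable form (x,y) ↦ φ(x)·ψ(y) for continuous linear functionals φ, ψ : E → ℝ. (Instance k = 2 of the lemma that all operational tangent space summands D^(k)₀E are nonzero for an infinite-dimensional Hilbert space.) -/
/-!
A finite sum `∑ φᵢ ⊗ ψᵢ` of decomposable forms vanishes at `(x, x)` for every `x` in the common
kernel of the `φᵢ`, which is nontrivial in infinite dimension. The inner product equals `‖x‖²`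
there, so it lies at distance at least `1` from the span of the decomposable forms, and a
Hahn–Banach functional on the quotient by that span separates the two.
-/

open Module Set

theorem Submodule.exists_strongDual_apply_ne_zero_of_le_norm_sub (𝕜 : Type*) {E : Type*}
    [RCLike 𝕜] [SeminormedAddCommGroup E] [NormedSpace 𝕜 E] (S : Submodule 𝕜 E) {x : E} {r : ℝ}
    (hr : 0 < r) (hx : ∀ y ∈ S, r ≤ ‖x - y‖) :
    ∃ f : StrongDual 𝕜 E, f x ≠ 0 ∧ ∀ y ∈ S, f y = 0 := by
  have hmk : ‖S.mkQ x‖ ≠ 0 := by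
    refine (hr.trans_le ?_).ne'
    calc r ≤ Metric.infDist x S := (Metric.le_infDist ⟨0, S.zero_mem⟩).2 fun y hy =>
          (hx y hy).trans_eq (dist_eq_norm x y).symm
      _ = ‖S.mkQ x‖ := (QuotientAddGroup.norm_mk (S := S.toAddSubgroup) x).symm
  obtain ⟨g, -, hgx⟩ := exists_dual_vector 𝕜 (S.mkQ x) hmk
  refine ⟨g ∘L S.mkQL, ?_, fun y hy => ?_⟩
  · change g (S.mkQ x) ≠ 0
    rw [hgx]
    exact_mod_cast hmk
  · simp [(Submodule.Quotient.mk_eq_zero S).2 hy]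

theorem exists_finset_forall_apply_eq_zero_of_mem_span_smulRight {R M N : Type*}
    [CommSemiring R] [TopologicalSpace R] [TopologicalSpace M] [AddCommMonoid M] [Module R M]
    [TopologicalSpace N] [AddCommMonoid N] [Module R N] [ContinuousAdd N] [ContinuousSMul R N]
    {T : M →L[R] N}
    (hT : T ∈ Submodule.span R (range fun p : (M →L[R] R) × N => p.1.smulRight p.2)) :
    ∃ s : Finset (Dual R M), ∀ x, (∀ φ ∈ s, φ x = 0) → T x = 0 := by
  classical
  induction hT using Submodule.span_induction with
  | mem T hT =>
    obtain ⟨⟨φ, f⟩, rfl⟩ := hT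
    refine ⟨{(φ : M →ₗ[R] R)}, fun x hx => ?_⟩
    have hφx : φ x = 0 := hx _ (Finset.mem_singleton_self _)
    simp [hφx]
  | zero => exact ⟨∅, fun _ _ => rfl⟩
  | add T₁ T₂ _ _ ih₁ ih₂ =>
    obtain ⟨s₁, h₁⟩ := ih₁
    obtain ⟨s₂, h₂⟩ := ih₂
    refine ⟨s₁ ∪ s₂, fun x hx => ?_⟩
    simp only [Finset.mem_union] at hx
    simp [h₁ x fun φ hφ => hx φ (.inl hφ), h₂ x fun φ hφ => hx φ (.inr hφ)]
  | smul c T _ ih =>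
    obtain ⟨s, h⟩ := ih
    exact ⟨s, fun x hx => by simp [h x hx]⟩

theorem exists_ne_zero_forall_apply_eq_zero {K E : Type*} [Field K] [AddCommGroup E] [Module K E]
    (hE : ¬ FiniteDimensional K E) (s : Finset (Dual K E)) :
    ∃ x ≠ 0, ∀ φ ∈ s, φ x = 0 := by
  let L : E →ₗ[K] s → K := LinearMap.pi fun φ => φ.1
  have hL : ¬ Function.Injective L := fun h => hE (.of_injective L h)
  rw [← LinearMap.ker_eq_bot, ← Ne, Submodule.ne_bot_iff] at hL
  obtain ⟨x, hxL, hx⟩ := hL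
  exact ⟨x, hx, fun φ hφ => congrFun hxL ⟨φ, hφ⟩⟩

theorem one_le_norm_sub_of_mem_span_smulRight {𝕜 E : Type*} [NontriviallyNormedField 𝕜]
    [NormedAddCommGroup E] [NormedSpace 𝕜 E] (hE : ¬ FiniteDimensional 𝕜 E)
    {B : E →L[𝕜] E →L[𝕜] 𝕜} (hB : ∀ x, ‖B x x‖ = ‖x‖ ^ 2) {T : E →L[𝕜] E →L[𝕜] 𝕜}
    (hT : T ∈ Submodule.span 𝕜 (range fun p : (E →L[𝕜] 𝕜) × (E →L[𝕜] 𝕜) => p.1.smulRight p.2)) :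
    1 ≤ ‖B - T‖ := by
  obtain ⟨s, hs⟩ := exists_finset_forall_apply_eq_zero_of_mem_span_smulRight hT
  obtain ⟨x, hx0, hx⟩ := exists_ne_zero_forall_apply_eq_zero hE s
  have hdiag : (B - T) x x = B x x := by simp [hs x hx]
  refine le_of_mul_le_mul_right ?_ (by positivity : 0 < ‖x‖ ^ 2)
  calc 1 * ‖x‖ ^ 2 = ‖(B - T) x x‖ := by rw [hdiag, hB, one_mul]
    _ ≤ ‖B - T‖ * ‖x‖ * ‖x‖ := (B - T).le_opNorm₂ x x
    _ = ‖B - T‖ * ‖x‖ ^ 2 := by ring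

theorem exists_functional_vanishing_on_decomposable_general {E : Type*}
    [NormedAddCommGroup E] [InnerProductSpace ℝ E]
    (hE : ¬ FiniteDimensional ℝ E) :
    ∃ l : (E →L[ℝ] E →L[ℝ] ℝ) →L[ℝ] ℝ, l ≠ 0 ∧
      ∀ φ ψ : E →L[ℝ] ℝ, l (φ.smulRight ψ) = 0 := by
  set S := Submodule.span ℝ (range fun p : (E →L[ℝ] ℝ) × (E →L[ℝ] ℝ) => p.1.smulRight p.2)
  -- over `ℝ` the sesquilinear `innerSL ℝ` is definitionally a bilinear form
  let B : E →L[ℝ] E →L[ℝ] ℝ := innerSL ℝ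
  have hB : ∀ x, ‖B x x‖ = ‖x‖ ^ 2 := fun x => by
    change ‖inner ℝ x x‖ = ‖x‖ ^ 2
    simp
  have hfar : ∀ T ∈ S, 1 ≤ ‖B - T‖ := fun T hT => one_le_norm_sub_of_mem_span_smulRight hE hB hT
  obtain ⟨l, hlB, hlS⟩ :=
    S.exists_strongDual_apply_ne_zero_of_le_norm_sub ℝ (x := B) one_pos hfar
  exact ⟨l, fun h => hlB (by simp [h]),
    fun φ ψ => hlS _ (Submodule.subset_span ⟨(φ, ψ), rfl⟩)⟩

/-- For an infinite-dimensional real Hilbert space there is a nonzero bounded linear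
functional on the space of continuous bilinear forms vanishing on all decomposable
forms (the operational tangent summand `D⁽²⁾₀E` is nonzero). -/
theorem exists_functional_vanishing_on_decomposable {E : Type*}
    [NormedAddCommGroup E] [InnerProductSpace ℝ E] [CompleteSpace E]
    (hE : ¬ FiniteDimensional ℝ E) :
    ∃ l : (E →L[ℝ] E →L[ℝ] ℝ) →L[ℝ] ℝ, l ≠ 0 ∧
      ∀ φ ψ : E →L[ℝ] ℝ, l (φ.smulRight ψ) = 0 :=
  exists_functional_vanishing_on_decomposable_general hE
end

section
/- Let E be a real inner product space and k a natural number. Then the set of injective continuous linear maps from ℝᵏ (with the Euclidean norm) to E is open in the space L(ℝᵏ, E) of continuous linear maps with the operator norm. (Openness of the Stiefel manifold GL(k,∞) in L(ℝᵏ, ℝ^∞).) -/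
/-- The set of injective continuous linear maps from Euclidean `ℝᵏ` to an inner
product space `E` is open in the operator norm (openness of the Stiefel manifold
`GL(k,∞)` in `L(ℝᵏ, ℝ^∞)`). -/
theorem isOpen_injective_clm {E : Type*}
    [NormedAddCommGroup E] [InnerProductSpace ℝ E] (k : ℕ) :
    IsOpen {A : EuclideanSpace ℝ (Fin k) →L[ℝ] E | Function.Injective A} := by
  rw [Metric.isOpen_iff]
  intro A hA
  obtain ⟨K, hK0, hK⟩ := LinearMap.exists_antilipschitzWith (A : EuclideanSpace ℝ (Fin k) →ₗ[ℝ] E)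
    (LinearMap.ker_eq_bot.2 hA)
  refine ⟨(2 * K)⁻¹, by positivity, fun B hB => ?_⟩
  rw [Metric.mem_ball, dist_eq_norm] at hB
  intro x y hxy
  rw [← sub_eq_zero, ← norm_eq_zero]
  by_contra h
  have hx : (0 : ℝ) < ‖x - y‖ := lt_of_le_of_ne (norm_nonneg _) (Ne.symm h)
  have h1 : ‖x - y‖ ≤ K * ‖A (x - y)‖ := by
    have := hK.le_mul_dist (x - y) 0
    simpa [dist_eq_norm] using this
  have h2 : ‖A (x - y)‖ ≤ ‖(A - B) (x - y)‖ := by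
    have : A (x - y) = (A - B) (x - y) + B (x - y) := by simp
    have hB0 : B (x - y) = 0 := by rw [map_sub, hxy, sub_self]
    rw [this, hB0, add_zero]
  have h3 : ‖(A - B) (x - y)‖ ≤ ‖A - B‖ * ‖x - y‖ := (A - B).le_opNorm _
  have h4 : ‖A - B‖ < (2 * K)⁻¹ := by rwa [← norm_sub_rev]
  have hKpos : (0 : ℝ) < K := hK0
  have : ‖x - y‖ ≤ K * ((2 * K)⁻¹ * ‖x - y‖) := by
    calc ‖x - y‖ ≤ K * ‖A (x - y)‖ := h1
    _ ≤ K * (‖A - B‖ * ‖x - y‖) := by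
        exact mul_le_mul_of_nonneg_left (h2.trans h3) hKpos.le
    _ ≤ K * ((2 * K)⁻¹ * ‖x - y‖) := by
        exact mul_le_mul_of_nonneg_left (mul_le_mul_of_nonneg_right h4.le hx.le) hKpos.le
  push_cast at this
  have hne : (K:ℝ) ≠ 0 := hKpos.ne'
  have key : (K:ℝ) * ((2 * (K:ℝ))⁻¹ * ‖x - y‖) = 2⁻¹ * ‖x - y‖ := by
    field_simp
  rw [key] at this
  linarith
end

section
/- Let E be a real inner product space, k a natural number, and B : ℝᵏ → E an injective linear map. Then there exist a unique linear map p : ℝᵏ → E preserving inner products (i.e. ⟨p(x), p(y)⟩ = ⟨x, y⟩ for all x, y, where ℝᵏ carries the Euclidean inner product) and a unique upper triangular k × k real matrix q with strictly positive diagonal entries such that B(x) = p(q·x) for all x ∈ ℝᵏ. (Iwasawa/QR decomposition: GL(k,∞) = O(k,∞)·T(k).) -/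
/-!
Existence is Gram–Schmidt: orthonormalising the columns `v j = B eⱼ` (`eⱼ` the standard basis)
gives `u` with `v j = ∑_{i ≤ j} ⟪u i, v j⟫ • u i` and `⟪u j, v j⟫ = ‖gramSchmidt v j‖ > 0`, so
`p eᵢ = u i`, `q i j = ⟪u i, v j⟫` works. Conversely, for any factorisation the vectors `p eᵢ` are
orthonormal and `v j = ∑_{i ≤ j} q i j • p eᵢ` with `q j j > 0`; by induction on `j`, removing
from `v j` its projections on the earlier `p eᵢ` leaves `q j j • p eⱼ`, so `p eⱼ` is the `j`-th
normalised Gram–Schmidt vector of `v`. This determines `p`, and then `q i j = ⟪p eᵢ, v j⟫`.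
-/

open scoped InnerProductSpace RealInnerProductSpace

open Finset InnerProductSpace

theorem Finset.sum_univ_eq_add_sum_Iio {ι M : Type*} [LinearOrder ι] [LocallyFiniteOrderBot ι]
    [Fintype ι] [AddCommMonoid M] {g : ι → M} (j : ι) (hg : ∀ i, j < i → g i = 0) :
    ∑ i, g i = g j + ∑ i ∈ Iio j, g i := by
  rw [← sum_subset (subset_univ (Iic j)) fun i _ hi => hg i (not_le.mp (by simpa using hi)),
    ← Iio_insert, sum_insert notMem_Iio_self]

namespace InnerProductSpace

section GramSchmidt

variable {𝕜 E ι : Type*} [RCLike 𝕜] [NormedAddCommGroup E] [InnerProductSpace 𝕜 E]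
  [LinearOrder ι] [LocallyFiniteOrderBot ι] [WellFoundedLT ι]

theorem gramSchmidt_eq_sub_sum_gramSchmidtNormed (f : ι → E) (n : ι) :
    gramSchmidt 𝕜 f n =
      f n - ∑ i ∈ Iio n, ⟪gramSchmidtNormed 𝕜 f i, f n⟫_𝕜 • gramSchmidtNormed 𝕜 f i := by
  rw [eq_sub_iff_add_eq, eq_comm]
  convert gramSchmidt_def'' 𝕜 f n using 3 with i
  simp only [gramSchmidtNormed, inner_smul_left, map_inv₀, RCLike.conj_ofReal, smul_smul]
  congr 1
  ring

theorem gramSchmidtNormed_inv_triangular (f : ι → E) {i j : ι} (hij : i < j) :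
    ⟪gramSchmidtNormed 𝕜 f j, f i⟫_𝕜 = 0 := by
  simp [gramSchmidtNormed, inner_smul_left, gramSchmidt_inv_triangular 𝕜 f hij]

theorem inner_gramSchmidtNormed_eq_norm_gramSchmidt (f : ι → E) (n : ι) :
    ⟪gramSchmidtNormed 𝕜 f n, f n⟫_𝕜 = ‖gramSchmidt 𝕜 f n‖ := by
  have hgs : ⟪gramSchmidt 𝕜 f n, f n⟫_𝕜 = (‖gramSchmidt 𝕜 f n‖ : 𝕜) ^ 2 := by
    conv_lhs => rw [gramSchmidt_def'' 𝕜 f n]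
    simp only [inner_add_right, inner_sum, inner_smul_right, inner_self_eq_norm_sq_to_K]
    rw [sum_eq_zero fun i hi => by rw [gramSchmidt_orthogonal 𝕜 f (mem_Iio.1 hi).ne', mul_zero],
      add_zero]
  by_cases h : gramSchmidt 𝕜 f n = 0
  · simp [gramSchmidtNormed, h]
  · rw [gramSchmidtNormed, inner_smul_left, hgs, map_inv₀, RCLike.conj_ofReal]
    field_simp

theorem gramSchmidt_eq_inner_smul_gramSchmidtNormed (f : ι → E) (n : ι) :
    gramSchmidt 𝕜 f n = ⟪gramSchmidtNormed 𝕜 f n, f n⟫_𝕜 • gramSchmidtNormed 𝕜 f n := by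
  rw [inner_gramSchmidtNormed_eq_norm_gramSchmidt, gramSchmidtNormed]
  by_cases h : gramSchmidt 𝕜 f n = 0
  · simp [h]
  · rw [smul_inv_smul₀ (by simpa using h)]

theorem sum_inner_gramSchmidtNormed_smul [Fintype ι] (f : ι → E) (j : ι) :
    ∑ i, ⟪gramSchmidtNormed 𝕜 f i, f j⟫_𝕜 • gramSchmidtNormed 𝕜 f i = f j := by
  rw [sum_univ_eq_add_sum_Iio j fun i hi => by
      rw [gramSchmidtNormed_inv_triangular f hi, zero_smul],
    ← gramSchmidt_eq_inner_smul_gramSchmidtNormed, gramSchmidt_eq_sub_sum_gramSchmidtNormed,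
    sub_add_cancel]

end GramSchmidt

theorem gramSchmidtNormed_eq_of_orthonormal {E ι : Type*} [NormedAddCommGroup E]
    [InnerProductSpace ℝ E] [LinearOrder ι] [LocallyFiniteOrderBot ι] [WellFoundedLT ι]
    [Fintype ι] {f u : ι → E} (hu : Orthonormal ℝ u) {q : Matrix ι ι ℝ}
    (hq : q.IsUpperTriangular) (hdiag : ∀ i, 0 < q i i) (hf : ∀ j, f j = ∑ i, q i j • u i) :
    gramSchmidtNormed ℝ f = u := by
  funext j
  induction j using WellFoundedLT.induction with
  | _ j ih =>
    have hgs : gramSchmidt ℝ f j = q j j • u j := by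
      rw [gramSchmidt_eq_sub_sum_gramSchmidtNormed, sub_eq_iff_eq_add]
      conv_lhs => rw [hf j, sum_univ_eq_add_sum_Iio (g := fun i => q i j • u i) j
        fun i hi => by rw [hq hi, zero_smul]]
      refine congrArg (q j j • u j + ·) (sum_congr rfl fun i hi => ?_)
      rw [ih i (mem_Iio.1 hi), hf j, hu.inner_right_fintype]
    rw [gramSchmidtNormed, hgs, norm_smul, hu.1 j, mul_one, Real.norm_of_nonneg (hdiag j).le]
    exact inv_smul_smul₀ (hdiag j).ne' _

end InnerProductSpace

namespace LinearMap

section PiDomain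

variable {ι R M : Type*} [Fintype ι] [DecidableEq ι] [CommSemiring R] [AddCommMonoid M]
  [Module R M]

theorem apply_eq_sum_smul_apply_single (p : (ι → R) →ₗ[R] M) (x : ι → R) :
    p x = ∑ i, x i • p (Pi.single i 1) := by
  conv_lhs => rw [pi_eq_sum_univ' x]
  simp only [map_sum, map_smul]

theorem forall_apply_eq_apply_mulVec_iff {B p : (ι → R) →ₗ[R] M} {q : Matrix ι ι R} :
    (∀ x, B x = p (q.mulVec x)) ↔ ∀ j, B (Pi.single j 1) = ∑ i, q i j • p (Pi.single i 1) := by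
  refine ⟨fun h j => by rw [h, Matrix.mulVec_single_one, p.apply_eq_sum_smul_apply_single]; rfl,
    fun h x => ?_⟩
  simp_rw [B.apply_eq_sum_smul_apply_single x, p.apply_eq_sum_smul_apply_single (q.mulVec x), h,
    smul_sum, smul_smul, Matrix.mulVec, dotProduct, sum_smul]
  rw [sum_comm]
  simp_rw [mul_comm]

end PiDomain

theorem inner_map_map_eq_sum_mul_iff_orthonormal {ι E : Type*} [Fintype ι] [DecidableEq ι]
    [NormedAddCommGroup E] [InnerProductSpace ℝ E] {p : (ι → ℝ) →ₗ[ℝ] E} :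
    (∀ x y, ⟪p x, p y⟫ = ∑ i, x i * y i) ↔ Orthonormal ℝ fun i => p (Pi.single i 1) := by
  refine ⟨fun h => orthonormal_iff_ite.2 fun i j => ?_, fun hp x y => ?_⟩
  · simp [h, Pi.single_apply, eq_comm]
  · rw [p.apply_eq_sum_smul_apply_single x, p.apply_eq_sum_smul_apply_single y, hp.inner_sum]
    simp

end LinearMap

/-- Iwasawa (QR) decomposition: every injective linear map `B : ℝᵏ → E` factors
uniquely as `B = p ∘ q` with `p` inner-product preserving and `q` upper triangular
with positive diagonal entries. -/
theorem iwasawa_decomposition {E : Type*}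
    [NormedAddCommGroup E] [InnerProductSpace ℝ E]
    (k : ℕ) (B : (Fin k → ℝ) →ₗ[ℝ] E) (hB : Function.Injective B) :
    ∃! pq : ((Fin k → ℝ) →ₗ[ℝ] E) × Matrix (Fin k) (Fin k) ℝ,
      (∀ x y : Fin k → ℝ, ⟪pq.1 x, pq.1 y⟫ = ∑ i, x i * y i) ∧
      (∀ i j : Fin k, j < i → pq.2 i j = 0) ∧
      (∀ i : Fin k, 0 < pq.2 i i) ∧
      (∀ x : Fin k → ℝ, B x = pq.1 (pq.2.mulVec x)) := by
  set v : Fin k → E := fun j => B (Pi.single j 1)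
  have hv : LinearIndependent ℝ v :=
    (Pi.linearIndependent_single_one (Fin k) ℝ).map' B (LinearMap.ker_eq_bot.mpr hB)
  set u := gramSchmidtNormed ℝ v
  have hu : Orthonormal ℝ u := gramSchmidtNormed_orthonormal hv
  refine ⟨(Fintype.linearCombination ℝ u, Matrix.of fun i j => ⟪u i, v j⟫),
    ⟨?_, fun i j hij => gramSchmidtNormed_inv_triangular v hij, fun i => ?_, ?_⟩, ?_⟩
  · exact LinearMap.inner_map_map_eq_sum_mul_iff_orthonormal.2
      (by simpa [Fintype.linearCombination_apply_single] using hu)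
  · simpa [u, inner_gramSchmidtNormed_eq_norm_gramSchmidt] using gramSchmidt_ne_zero i hv
  · exact LinearMap.forall_apply_eq_apply_mulVec_iff.2 fun j => by
      simpa [Fintype.linearCombination_apply_single] using
        (sum_inner_gramSchmidtNormed_smul v j).symm
  · rintro ⟨p, q⟩ ⟨hp, hq_tri, hq_diag, hBpq⟩
    have hp_orthonormal := LinearMap.inner_map_map_eq_sum_mul_iff_orthonormal.1 hp
    have hv_expand := LinearMap.forall_apply_eq_apply_mulVec_iff.1 hBpq
    have hu_eq : u = fun i => p (Pi.single i 1) :=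
      gramSchmidtNormed_eq_of_orthonormal hp_orthonormal (fun i j hij => hq_tri i j hij) hq_diag
        hv_expand
    refine Prod.ext ((Pi.basisFun ℝ (Fin k)).ext fun i => ?_) (Matrix.ext fun i j => ?_)
    · simp [hu_eq, Fintype.linearCombination_apply_single]
    · simp [hu_eq, v, hv_expand j, hp_orthonormal.inner_right_fintype]
end

section
/- Let E be a real Banach space and U ⊆ E a subset. Then U is open in the norm topology if and only if for every C^∞ curve c : ℝ → E the preimage c⁻¹(U) is open in ℝ. (Banach-space instance of the claim that the c^∞-topology, the final topology with respect to all smooth curves, coincides with the given topology on a Fréchet space.) -/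
/-!
If `U` is not a neighbourhood of `x ∈ U`, pick points `yₙ ∉ U` converging to `x` so fast that
the curve `c s = x + ∑ φₙ(s) • (yₙ - x)`, with `φₙ` disjointly supported bumps around `2⁻ⁿ`,
is smooth: the `k`-th derivative of the `n`-th term is at most `2⁻ⁿ` once `n ≥ k`.
Then `c 0 = x ∈ U` while `c 2⁻ⁿ = yₙ ∉ U`, so `c⁻¹(U)` is not open.
-/

open Filter Metric Set
open scoped ContDiff

section SmoothSeries

variable {𝕜 E F : Type*} [NontriviallyNormedField 𝕜]
  [NormedAddCommGroup E] [NormedSpace 𝕜 E] [NormedAddCommGroup F] [NormedSpace 𝕜 F]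

theorem norm_iteratedFDeriv_smul_const_le {f : E → 𝕜} {x : E} {k : ℕ}
    (hf : ContDiffAt 𝕜 k f x) (v : F) :
    ‖iteratedFDeriv 𝕜 k (fun y ↦ f y • v) x‖ ≤ ‖iteratedFDeriv 𝕜 k f x‖ * ‖v‖ := by
  rw [iteratedFDeriv_smul_const_apply hf]
  refine (ContinuousLinearMap.norm_compContinuousMultilinearMap_le _ _).trans ?_
  rw [mul_comm]
  gcongr
  rw [ContinuousLinearMap.norm_smulRight_apply]
  exact mul_le_of_le_one_left (norm_nonneg v) (ContinuousLinearMap.norm_id_le)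

theorem exists_bound_iteratedFDeriv_of_hasCompactSupport {f : E → F} (hf : ContDiff 𝕜 ∞ f)
    (h : HasCompactSupport f) (N : ℕ) :
    ∃ C, ∀ k ≤ N, ∀ x, ‖iteratedFDeriv 𝕜 k f x‖ ≤ C := by
  have hbound (k : ℕ) : ∃ C, ∀ x, ‖iteratedFDeriv 𝕜 k f x‖ ≤ C :=
    (h.iteratedFDeriv k).exists_bound_of_continuous
      (hf.continuous_iteratedFDeriv (mod_cast le_top))
  choose M hM using hbound
  obtain ⟨C, hC⟩ := ((Finset.range (N + 1)).image M).exists_le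
  exact ⟨C, fun k hk x ↦
    (hM k x).trans (hC _ (Finset.mem_image_of_mem _ (Finset.mem_range.2 (by omega))))⟩

variable [IsRCLikeNormedField 𝕜] [CompleteSpace F]

theorem contDiff_tsum_smul_const {φ : ℕ → E → 𝕜} {v : ℕ → F} {C u : ℕ → ℝ}
    (hφ : ∀ n, ContDiff 𝕜 ∞ (φ n))
    (hC : ∀ n, ∀ k ≤ n, ∀ x, ‖iteratedFDeriv 𝕜 k (φ n) x‖ ≤ C n)
    (hu : Summable u) (hv : ∀ n, C n * ‖v n‖ ≤ u n) :
    ContDiff 𝕜 ∞ fun x ↦ ∑' n, φ n x • v n := by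
  refine contDiff_tsum_of_eventually (fun n ↦ (hφ n).smul contDiff_const)
    (v := fun _ ↦ u) (fun _ _ ↦ hu) fun k _ ↦ ?_
  filter_upwards [Nat.cofinite_eq_atTop ▸ eventually_ge_atTop k] with n hkn x
  calc ‖iteratedFDeriv 𝕜 k (fun y ↦ φ n y • v n) x‖
      ≤ ‖iteratedFDeriv 𝕜 k (φ n) x‖ * ‖v n‖ :=
        norm_iteratedFDeriv_smul_const_le ((hφ n).of_le (mod_cast le_top)).contDiffAt _
    _ ≤ C n * ‖v n‖ := by gcongr; exact hC n k hkn x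
    _ ≤ u n := hv n

end SmoothSeries

theorem half_pow_succ_le_dist_half_pow {m n : ℕ} (h : m ≠ n) :
    (1 / 2 : ℝ) ^ (m + 1) ≤ dist ((1 / 2 : ℝ) ^ n) ((1 / 2) ^ m) := by
  have hm := pow_succ (1 / 2 : ℝ) m
  have hn := pow_succ (1 / 2 : ℝ) n
  rw [Real.dist_eq, le_abs]
  rcases h.lt_or_gt with h | h
  · have : (1 / 2 : ℝ) ^ n ≤ (1 / 2) ^ (m + 1) :=
      pow_le_pow_of_le_one (by norm_num) (by norm_num) h
    right
    linarith
  · have : (1 / 2 : ℝ) ^ m ≤ (1 / 2) ^ (n + 1) :=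
      pow_le_pow_of_le_one (by norm_num) (by norm_num) h
    left
    linarith [pow_nonneg (by norm_num : (0 : ℝ) ≤ 1 / 2) n]

noncomputable def halfPowBump (n : ℕ) : ContDiffBump ((1 / 2 : ℝ) ^ n) where
  rIn := (1 / 2) ^ (n + 2)
  rOut := (1 / 2) ^ (n + 1)
  rIn_pos := by positivity
  rIn_lt_rOut := pow_lt_pow_right_of_lt_one₀ (by norm_num) (by norm_num) (by omega)

theorem halfPowBump_apply_self (n : ℕ) : halfPowBump n ((1 / 2) ^ n) = 1 :=
  (halfPowBump n).one_of_mem_closedBall (mem_closedBall_self (halfPowBump n).rIn_pos.le)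

theorem halfPowBump_apply_of_ne {m n : ℕ} (h : m ≠ n) : halfPowBump m ((1 / 2) ^ n) = 0 :=
  (halfPowBump m).zero_of_le_dist (half_pow_succ_le_dist_half_pow h)

theorem halfPowBump_apply_zero (m : ℕ) : halfPowBump m 0 = 0 := by
  refine (halfPowBump m).zero_of_le_dist ?_
  rw [dist_zero_left, Real.norm_of_nonneg (by positivity)]
  exact pow_le_pow_of_le_one (by norm_num) (by norm_num) m.le_succ

theorem exists_pos_forall_exists_contDiff_curve_half_pow {E : Type*} [NormedAddCommGroup E]
    [NormedSpace ℝ E] [CompleteSpace E] (x : E) :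
    ∃ δ : ℕ → ℝ, (∀ n, 0 < δ n) ∧ ∀ y : ℕ → E, (∀ n, dist (y n) x ≤ δ n) →
      ∃ c : ℝ → E, ContDiff ℝ ∞ c ∧ c 0 = x ∧ ∀ n, c ((1 / 2) ^ n) = y n := by
  choose C hC using fun n ↦ exists_bound_iteratedFDeriv_of_hasCompactSupport
    (halfPowBump n).contDiff (halfPowBump n).hasCompactSupport n
  refine ⟨fun n ↦ (1 / 2) ^ n / (|C n| + 1), fun n ↦ by positivity, fun y hy ↦ ?_⟩
  refine ⟨fun s ↦ x + ∑' n, halfPowBump n s • (y n - x), ?_, ?_, fun n ↦ ?_⟩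
  · refine contDiff_const.add (contDiff_tsum_smul_const (fun n ↦ (halfPowBump n).contDiff) hC
      (summable_geometric_of_lt_one (by norm_num : (0 : ℝ) ≤ 1 / 2) (by norm_num)) fun n ↦ ?_)
    calc C n * ‖y n - x‖ ≤ (|C n| + 1) * ((1 / 2) ^ n / (|C n| + 1)) := by
          rw [← dist_eq_norm]
          gcongr
          · exact (le_abs_self _).trans (le_add_of_nonneg_right zero_le_one)
          · exact hy n
      _ = (1 / 2) ^ n := mul_div_cancel₀ _ (by positivity)
  · simp [halfPowBump_apply_zero]
  · dsimp only
    rw [tsum_eq_single n fun m hm ↦ by rw [halfPowBump_apply_of_ne hm, zero_smul],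
      halfPowBump_apply_self, one_smul, add_sub_cancel]

/-- On a Banach space the `c^∞`-topology coincides with the norm topology: a set
is open iff its preimage under every smooth curve is open. -/
theorem isOpen_iff_smooth_preimage_open {E : Type*}
    [NormedAddCommGroup E] [NormedSpace ℝ E] [CompleteSpace E] (U : Set E) :
    IsOpen U ↔ ∀ c : ℝ → E, ContDiff ℝ (⊤ : ℕ∞) c → IsOpen (c ⁻¹' U) := by
  refine ⟨fun hU c hc ↦ hU.preimage hc.continuous, fun H ↦ ?_⟩
  refine isOpen_iff_mem_nhds.2 fun x hx ↦ by_contra fun hxU ↦ ?_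
  obtain ⟨δ, hδ, hcurve⟩ := exists_pos_forall_exists_contDiff_curve_half_pow x
  have hnot_mem (n : ℕ) : ∃ y, y ∉ U ∧ dist y x ≤ δ n :=
    ((not_eventually.1 hxU).and_eventually (closedBall_mem_nhds x (hδ n))).exists
  choose y hyU hy using hnot_mem
  obtain ⟨c, hc, hc0, hcy⟩ := hcurve y hy
  have hpre : ∀ᶠ n in atTop, (1 / 2 : ℝ) ^ n ∈ c ⁻¹' U :=
    tendsto_pow_atTop_nhds_zero_of_lt_one (by norm_num) (by norm_num)
      ((H c hc).mem_nhds (by rwa [mem_preimage, hc0]))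
  obtain ⟨n, hn⟩ := hpre.exists
  exact hyU n (hcy n ▸ hn)
end
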